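/- Let C, t > 0 and let n ≥ 2 be an integer. There exists a constant c_n > 0, depending only on C, t, n, r and q, such that for every Borel probability measure ν on ℝ^q whose support is compact of diameter at most 1 and which satisfies ν(B(x,ε)) ≤ C·ε^t for all x ∈ ℝ^q and all ε > 0, every n-optimal set α_n ∈ C_{n,r}(ν), and every Voronoi partition (P_a(α_n))_{a∈α_n}: ν(P_a(α_n)) ≥ c_n for every a ∈ α_n. -/

import Mathlib

open MeasureTheory Metric Set

noncomputable section

variable {E : Type*} [NormedAddCommGroup E] [NormedSpace ℝ E]
  [MeasurableSpace E] [BorelSpace E]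

/-- The (topological) support of a Borel measure: the set of points all of whose
neighborhoods have positive measure. -/
def msupp (μ : Measure E) : Set E := {x | ∀ ε : ℝ, 0 < ε → 0 < μ (ball x ε)}

/-- The set of achievable quantization integrals `∫ d(x,α)^r dν` over sets `α` with
`1 ≤ card α ≤ n`. -/
def quantSet (ν : Measure E) (r : ℝ) (n : ℕ) : Set ℝ :=
  {I | ∃ α : Finset E, α.Nonempty ∧ α.card ≤ n ∧ I = ∫ x, infDist x (α : Set E) ^ r ∂ν}

/-- The `n`-th quantization error of order `r`, raised to the power `r`:
`e_{n,r}(ν)^r = inf { ∫ d(x,α)^r dν : 1 ≤ card α ≤ n }`. -/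
def quantErrPow (ν : Measure E) (r : ℝ) (n : ℕ) : ℝ := sInf (quantSet ν r n)

/-- `α` is an `n`-optimal set for `ν` of order `r`. -/
def IsOptimalSet (ν : Measure E) (r : ℝ) (n : ℕ) (α : Finset E) : Prop :=
  α.Nonempty ∧ α.card ≤ n ∧ (∫ x, infDist x (α : Set E) ^ r ∂ν) = quantErrPow ν r n

/-- `P` is a Voronoi partition (into Borel sets) with respect to the finite set `α`. -/
def IsVoronoiPartition (α : Finset E) (P : E → Set E) : Prop :=
  (∀ a ∈ α, MeasurableSet (P a)) ∧
  ((⋃ a ∈ α, P a) = univ) ∧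
  (∀ a ∈ α, ∀ b ∈ α, a ≠ b → Disjoint (P a) (P b)) ∧
  (∀ a ∈ α, {x | dist x a < infDist x ((α : Set E) \ {a})} ⊆ P a) ∧
  (∀ a ∈ α, P a ⊆ {x | dist x a = infDist x (α : Set E)})

/-- `I_a(α,ν) = ∫_{P_a(α)} d(x,α)^r dν`. -/
def voronoiI (ν : Measure E) (r : ℝ) (α : Finset E) (P : E → Set E) (a : E) : ℝ :=
  ∫ x in P a, infDist x (α : Set E) ^ r ∂ν

/-- `μ` is `s0`-dimensional Ahlfors–David regular with constants `ε0, C1, C2`, together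
with the global upper bound (valid for all centers and radii). -/
def IsAhlfors (μ : Measure E) (s0 ε0 C1 C2 : ℝ) : Prop :=
  0 < s0 ∧ 0 < ε0 ∧ 0 < C1 ∧ 0 < C2 ∧
  (∀ x ∈ msupp μ, ∀ ε : ℝ, 0 < ε → ε < ε0 →
    ENNReal.ofReal (C1 * ε ^ s0) ≤ μ (closedBall x ε) ∧
    μ (closedBall x ε) ≤ ENNReal.ofReal (C2 * ε ^ s0)) ∧
  (∀ x : E, ∀ ε : ℝ, 0 < ε → μ (closedBall x ε) ≤ ENNReal.ofReal (C2 * ε ^ s0))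

/-- `h` is a similitude of ratio `ρ`. -/
def IsSimilitude (h : E → E) (ρ : ℝ) : Prop :=
  Function.Surjective h ∧ ∀ x y, dist (h x) (h y) = ρ * dist x y

/-- The measure `λ_B = μ(·|B) ∘ h`, i.e. `λ_B(A) = μ(h(A) ∩ B)/μ(B)`. -/
def condPull (μ : Measure E) (B : Set E) (h : E → E) : Measure E :=
  Measure.comap h (ProbabilityTheory.cond μ B)

/-- There exist `j` pairwise disjoint closed balls of radius `ρ` centered in `K`. -/
def PackingNum (K : Set E) (ρ : ℝ) (j : ℕ) : Prop :=
  ∃ c : Fin j → E, (∀ i, c i ∈ K) ∧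
    Pairwise fun i i' => Disjoint (closedBall (c i) ρ) (closedBall (c i') ρ)

end

/-!
Choose `ε > 0` with `n C (3ε)^t ≤ 1/2` and a finite `ε/2`-net `T` of the unit ball. For any set `γ`
of at most `n` points, the points within `3ε` of `γ` carry mass at most `1/2`; pigeonholing the
rest over the net, translated to a point of the support, gives a ball `B(z, ε)` of mass at least
`μ₀ = 1/(2 card T)` farther than `3ε` from `γ`. Adding `z` to `γ` lowers `∫ d(x,γ)^r dν` by at
least `Δ = ((2ε)^r - ε^r) μ₀`, which depends only on `C, t, n, r` and the space.

Hence an optimal `α` has exactly `n ≥ 2` points, and deleting a point `a` raises the integral by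
at least `Δ`. The deletion only matters on `P_a(α)`, where the remaining points lie within
distance `4` (were they all farther than `3` from the support, the pair `{a, z}` would beat `α`),
so `Δ ≤ 4^r ν(P_a(α))`.
-/

open Filter Topology

theorem integral_add_mul_measureReal_le {X : Type*} [MeasurableSpace X] {ν : Measure X}
    [IsFiniteMeasure ν] {f g : X → ℝ} (hf : Integrable f ν) (hg : Integrable g ν)
    (hfg : f ≤ᵐ[ν] g) {s : Set X} (hs : MeasurableSet s) {δ : ℝ}
    (hδ : ∀ x ∈ s, f x + δ ≤ g x) :
    ∫ x, f x ∂ν + δ * ν.real s ≤ ∫ x, g x ∂ν := by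
  have h_on : δ * ν.real s ≤ ∫ x in s, (g - f) x ∂ν :=
    setIntegral_ge_of_const_le_real hs (measure_ne_top ν s)
      (fun x hx => by simp only [Pi.sub_apply]; linarith [hδ x hx]) (hg.sub hf).integrableOn
  have h_all : ∫ x in s, (g - f) x ∂ν ≤ ∫ x, (g - f) x ∂ν :=
    setIntegral_le_integral (hg.sub hf) (hfg.mono fun x hx => sub_nonneg.2 hx)
  rw [integral_sub' hg hf] at h_all
  linarith

theorem exists_pos_three_mul_le_and_mul_rpow_le (a C : ℝ) {t : ℝ} (ht : 0 < t) :
    ∃ ε > 0, 3 * ε ≤ 2 ∧ a * (C * (3 * ε) ^ t) ≤ 1 / 2 := by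
  have hcont : Continuous fun ε : ℝ => a * (C * (3 * ε) ^ t) := by
    fun_prop (disch := exact ht.le)
  have hsmall : ∀ᶠ ε in 𝓝 (0 : ℝ), 3 * ε ≤ 2 ∧ a * (C * (3 * ε) ^ t) ≤ 1 / 2 := by
    refine ((continuous_const.mul continuous_id).tendsto' 0 0 (by simp)).eventually_le_const
      (by norm_num) |>.and ((hcont.tendsto' 0 0 ?_).eventually_le_const (by norm_num))
    simp [Real.zero_rpow ht.ne']
  obtain ⟨ε, hε, hpos⟩ := ((hsmall.filter_mono nhdsWithin_le_nhds).and
    (self_mem_nhdsWithin : Ioi (0 : ℝ) ∈ 𝓝[>] 0)).exists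
  exact ⟨ε, hpos, hε⟩

section

variable {E : Type*} [NormedAddCommGroup E] [MeasurableSpace E]

theorem quantErrPow_le_integral (ν : Measure E) (r : ℝ) {n : ℕ} {γ : Finset E}
    (hγ : γ.Nonempty) (hγn : γ.card ≤ n) :
    quantErrPow ν r n ≤ ∫ x, infDist x (γ : Set E) ^ r ∂ν :=
  csInf_le ⟨0, by
    rintro _ ⟨β, -, -, rfl⟩
    exact integral_nonneg fun x => Real.rpow_nonneg infDist_nonneg r⟩ ⟨γ, hγ, hγn, rfl⟩

theorem IsVoronoiPartition.infDist_erase_le [DecidableEq E] {α : Finset E} {P : E → Set E}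
    (hP : IsVoronoiPartition α P) {a x : E} (hx : x ∉ P a) :
    infDist x (α.erase a : Set E) ≤ infDist x α := by
  obtain ⟨b, hb, hxb⟩ := mem_iUnion₂.1 (hP.2.1 ▸ mem_univ x)
  have hba : b ≠ a := by
    rintro rfl
    exact hx hxb
  rw [← hP.2.2.2.2 b hb hxb]
  exact infDist_le_dist_of_mem (Finset.mem_erase.2 ⟨hba, hb⟩)

def IsSpreadOut (ν : Measure E) (n : ℕ) (ε μ₀ : ℝ) : Prop :=
  ∀ γ : Finset E, γ.Nonempty → γ.card ≤ n →
    ∃ z ∈ msupp ν, 3 * ε < infDist z (γ : Set E) ∧ μ₀ ≤ ν.real (ball z ε)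

theorem half_le_measureReal_setOf_lt_infDist [OpensMeasurableSpace E] {ν : Measure E}
    [IsProbabilityMeasure ν] {C t δ : ℝ} {n : ℕ}
    (hball : ∀ x : E, ∀ ε : ℝ, 0 < ε → ν (closedBall x ε) ≤ ENNReal.ofReal (C * ε ^ t))
    (hδ : 0 < δ) (hnδ : n * (C * δ ^ t) ≤ 1 / 2) {γ : Finset E} (hγ : γ.Nonempty)
    (hγn : γ.card ≤ n) :
    1 / 2 ≤ ν.real {x | δ < infDist x (γ : Set E)} := by
  have hmeas : MeasurableSet {x | δ < infDist x (γ : Set E)} :=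
    measurableSet_lt measurable_const (continuous_infDist_pt _).measurable
  have hnear : {x | δ < infDist x (γ : Set E)}ᶜ ⊆ ⋃ b ∈ γ, closedBall b δ := by
    intro x hx
    obtain ⟨b, hb, hxb⟩ :=
      γ.finite_toSet.isCompact.exists_infDist_eq_dist (by exact_mod_cast hγ) x
    exact mem_biUnion hb (by simpa [mem_closedBall, ← hxb] using hx)
  have hcompl : ν {x | δ < infDist x (γ : Set E)}ᶜ ≤ ENNReal.ofReal (1 / 2) :=
    calc ν {x | δ < infDist x (γ : Set E)}ᶜ
        ≤ ∑ b ∈ γ, ν (closedBall b δ) :=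
          (measure_mono hnear).trans (measure_biUnion_finset_le _ _)
      _ ≤ ∑ _b ∈ γ, ENNReal.ofReal (C * δ ^ t) := Finset.sum_le_sum fun b _ => hball b δ hδ
      _ = γ.card * ENNReal.ofReal (C * δ ^ t) := by rw [Finset.sum_const, nsmul_eq_mul]
      _ ≤ n * ENNReal.ofReal (C * δ ^ t) := by gcongr
      _ = ENNReal.ofReal (n * (C * δ ^ t)) := by
        rw [ENNReal.ofReal_mul (Nat.cast_nonneg _), ENNReal.ofReal_natCast]
      _ ≤ ENNReal.ofReal (1 / 2) := ENNReal.ofReal_le_ofReal hnδ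
  have := ENNReal.toReal_le_of_le_ofReal (by norm_num) hcompl
  rw [← measureReal_def, probReal_compl_eq_one_sub hmeas] at this
  linarith

variable [SecondCountableTopology E]

theorem measure_compl_msupp (ν : Measure E) : ν (msupp ν)ᶜ = 0 := by
  refine measure_null_of_locally_null _ fun x hx => ?_
  simp only [msupp, mem_compl_iff, mem_ofPred_eq, not_forall, not_lt, nonpos_iff_eq_zero] at hx
  obtain ⟨ε, hε, hball⟩ := hx
  exact ⟨ball x ε, mem_nhdsWithin_of_mem_nhds (ball_mem_nhds x hε), hball⟩

theorem ae_mem_msupp (ν : Measure E) : ∀ᵐ x ∂ν, x ∈ msupp ν :=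
  measure_compl_msupp ν

theorem msupp_nonempty (ν : Measure E) [NeZero ν] :
    (msupp ν).Nonempty := by
  by_contra h
  have h0 := measure_compl_msupp ν
  rw [not_nonempty_iff_eq_empty.1 h, compl_empty, Measure.measure_univ_eq_zero] at h0
  exact NeZero.ne ν h0

theorem exists_mem_msupp_le_measureReal_ball {ν : Measure E} [IsFiniteMeasure ν]
    (hdiam : ∀ x ∈ msupp ν, ∀ y ∈ msupp ν, dist x y ≤ 1) {ε : ℝ}
    {T : Finset E} (hT : closedBall (0 : E) 1 ⊆ ⋃ y ∈ T, ball y (ε / 2)) {S : Set E} {m : ℝ}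
    (hm : 0 < m) (hS : m ≤ ν.real S) :
    ∃ z ∈ S ∩ msupp ν, m / T.card ≤ ν.real (ball z ε) := by
  have hS' : ν.real (S ∩ msupp ν) = ν.real S := by
    rw [measureReal_def, measure_inter_conull (measure_compl_msupp ν), ← measureReal_def]
  obtain ⟨x₀, -, hx₀⟩ : (S ∩ msupp ν).Nonempty :=
    nonempty_of_measure_ne_zero (μ := ν) fun h => by
      rw [measureReal_def, h, ENNReal.toReal_zero] at hS'
      linarith
  have hcover : S ∩ msupp ν ⊆ ⋃ y ∈ T, ball (x₀ + y) (ε / 2) ∩ (S ∩ msupp ν) := by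
    intro x hx
    have hx1 : x - x₀ ∈ closedBall (0 : E) 1 := by
      simpa [dist_eq_norm] using hdiam x hx.2 x₀ hx₀
    obtain ⟨y, hy, hxy⟩ := mem_iUnion₂.1 (hT hx1)
    exact mem_biUnion hy ⟨by simpa [mem_ball, dist_eq_norm, sub_sub] using hxy, hx⟩
  have hTne : T.Nonempty := by
    obtain ⟨y, hy, -⟩ := mem_iUnion₂.1 (hT (mem_closedBall_self zero_le_one))
    exact ⟨y, hy⟩
  have hsum :
      ∑ _y ∈ T, m / T.card ≤ ∑ y ∈ T, ν.real (ball (x₀ + y) (ε / 2) ∩ (S ∩ msupp ν)) :=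
    calc ∑ _y ∈ T, m / T.card = m := by
          rw [Finset.sum_const, nsmul_eq_mul]
          field_simp [(Finset.card_pos.2 hTne).ne']
      _ ≤ ν.real (S ∩ msupp ν) := hS'.symm ▸ hS
      _ ≤ _ :=
        (measureReal_mono hcover (measure_ne_top _ _)).trans (measureReal_biUnion_finset_le _ _)
  obtain ⟨y, -, hy⟩ := Finset.exists_le_of_sum_le hTne hsum
  obtain ⟨z, hzy, hz⟩ : (ball (x₀ + y) (ε / 2) ∩ (S ∩ msupp ν)).Nonempty :=
    nonempty_of_measure_ne_zero fun h => by
      rw [measureReal_def, h, ENNReal.toReal_zero] at hy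
      exact (div_pos hm (Nat.cast_pos.2 (Finset.card_pos.2 hTne))).not_ge hy
  refine ⟨z, hz, hy.trans (measureReal_mono fun x hx => ?_)⟩
  have := dist_triangle_right x z (x₀ + y)
  rw [mem_ball] at hzy ⊢
  linarith [hx.1.out]

variable [OpensMeasurableSpace E]

theorem isSpreadOut_of_measure_closedBall_le {ν : Measure E} [IsProbabilityMeasure ν]
    (hdiam : ∀ x ∈ msupp ν, ∀ y ∈ msupp ν, dist x y ≤ 1)
    {C t ε : ℝ} {n : ℕ}
    (hball : ∀ x : E, ∀ ε : ℝ, 0 < ε → ν (closedBall x ε) ≤ ENNReal.ofReal (C * ε ^ t))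
    (hε : 0 < ε) (hnε : n * (C * (3 * ε) ^ t) ≤ 1 / 2) {T : Finset E}
    (hT : closedBall (0 : E) 1 ⊆ ⋃ y ∈ T, ball y (ε / 2)) :
    IsSpreadOut ν n ε (1 / 2 / T.card) := by
  intro γ hγ hγn
  obtain ⟨z, ⟨hzγ, hz⟩, hzball⟩ := exists_mem_msupp_le_measureReal_ball hdiam hT
    (by norm_num) (half_le_measureReal_setOf_lt_infDist hball (by positivity) hnε hγ hγn)
  exact ⟨z, hz, hzγ, hzball⟩

variable {ν : Measure E} [IsFiniteMeasure ν] {r ε μ₀ : ℝ} {n : ℕ}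

theorem integrable_infDist_rpow (hν : Bornology.IsBounded (msupp ν)) {s : Set E} (hs : s.Nonempty)
    (hr : 0 ≤ r) :
    Integrable (fun x => infDist x s ^ r) ν := by
  obtain ⟨b, hb⟩ := hs
  obtain ⟨R, hR⟩ := hν.subset_closedBall b
  refine Integrable.mono' (integrable_const (R ^ r))
    ((continuous_infDist_pt s).rpow_const fun _ => Or.inr hr).aestronglyMeasurable ?_
  filter_upwards [ae_mem_msupp ν] with x hx
  rw [Real.norm_of_nonneg (Real.rpow_nonneg infDist_nonneg r)]
  exact Real.rpow_le_rpow infDist_nonneg ((infDist_le_dist_of_mem hb).trans (hR hx)) hr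

theorem integral_infDist_rpow_add_le (hν : Bornology.IsBounded (msupp ν)) (hr : 0 ≤ r)
    {s s' : Set E} (hs : s.Nonempty) {z : E} (hz : z ∈ s') (hzs : 3 * ε ≤ infDist z s)
    (hle : ∀ᵐ x ∂ν, infDist x s' ≤ infDist x s) :
    ∫ x, infDist x s' ^ r ∂ν + ((2 * ε) ^ r - ε ^ r) * ν.real (ball z ε)
      ≤ ∫ x, infDist x s ^ r ∂ν := by
  refine integral_add_mul_measureReal_le (integrable_infDist_rpow hν ⟨z, hz⟩ hr)
    (integrable_infDist_rpow hν hs hr)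
    (hle.mono fun x hx => Real.rpow_le_rpow infDist_nonneg hx hr)
    measurableSet_ball fun x hx => ?_
  have hxz : dist x z < ε := hx
  have hnear : infDist x s' ≤ ε := (infDist_le_dist_of_mem hz).trans hxz.le
  have hfar : 2 * ε ≤ infDist x s := by
    linarith [infDist_le_infDist_add_dist (s := s) (x := z) (y := x), dist_comm x z]
  linarith [Real.rpow_le_rpow infDist_nonneg hnear hr,
    Real.rpow_le_rpow (by linarith [dist_nonneg (x := x) (y := z)]) hfar hr]

theorem quantErrPow_add_le_integral (hν : Bornology.IsBounded (msupp ν)) (hr : 0 ≤ r)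
    (hε : 0 ≤ ε) (hspread : IsSpreadOut ν n ε μ₀) {γ : Finset E} (hγ : γ.Nonempty)
    (hγn : γ.card < n) :
    quantErrPow ν r n + ((2 * ε) ^ r - ε ^ r) * μ₀ ≤ ∫ x, infDist x (γ : Set E) ^ r ∂ν := by
  classical
  obtain ⟨z, -, hzγ, hzμ⟩ := hspread γ hγ hγn.le
  have hgain := integral_infDist_rpow_add_le (ν := ν) hν hr (s' := ↑(insert z γ))
    (by exact_mod_cast hγ) (by simp) hzγ.le
    (ae_of_all _ fun x => infDist_le_infDist_of_subset (by simp) (by exact_mod_cast hγ))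
  have hopt := quantErrPow_le_integral ν r (Finset.insert_nonempty z γ)
    ((Finset.card_insert_le z γ).trans hγn)
  have hμ := mul_le_mul_of_nonneg_left hzμ
    (sub_nonneg.2 (Real.rpow_le_rpow hε (by linarith : ε ≤ 2 * ε) hr))
  linarith

theorem IsOptimalSet.card_eq (hν : Bornology.IsBounded (msupp ν)) (hr : 0 < r) (hε : 0 < ε)
    (hμ₀ : 0 < μ₀) (hspread : IsSpreadOut ν n ε μ₀) {α : Finset E}
    (hα : IsOptimalSet ν r n α) :
    α.card = n := by
  obtain ⟨hne, hcard, hopt⟩ := hα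
  refine hcard.antisymm (not_lt.1 fun hlt => ?_)
  have hstep := quantErrPow_add_le_integral hν hr.le hε.le hspread hne hlt
  have hgain : 0 < (2 * ε) ^ r - ε ^ r :=
    sub_pos.2 (Real.rpow_lt_rpow hε.le (by linarith) hr)
  nlinarith

theorem IsOptimalSet.infDist_erase_le [DecidableEq E]
    (hdiam : ∀ x ∈ msupp ν, ∀ y ∈ msupp ν, dist x y ≤ 1) (hr : 0 < r) (hε : 0 < ε)
    (hε' : 3 * ε ≤ 2) (hμ₀ : 0 < μ₀) (hn : 2 ≤ n)
    (hspread : IsSpreadOut ν n ε μ₀) {α : Finset E} (hα : IsOptimalSet ν r n α) {a : E}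
    (ha : a ∈ α) {x₀ : E} (hx₀ : x₀ ∈ msupp ν) :
    infDist x₀ (α.erase a : Set E) ≤ 3 := by
  by_contra! hfar
  have hfar' : ∀ x ∈ msupp ν, 2 < infDist x (α.erase a : Set E) := fun x hx => by
    linarith [infDist_le_infDist_add_dist (s := (α.erase a : Set E)) (x := x₀) (y := x),
      hdiam x₀ hx₀ x hx]
  obtain ⟨z, hz, hza, hzμ⟩ := hspread {a} (Finset.singleton_nonempty a) (by simp; omega)
  rw [Finset.coe_singleton, infDist_singleton] at hza
  have hαne : (α : Set E).Nonempty := ⟨a, ha⟩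
  have hzα : 3 * ε ≤ infDist z α := (le_infDist hαne).2 fun b hb => by
    rcases eq_or_ne b a with rfl | hba
    · exact hza.le
    · linarith [hfar' z hz, infDist_le_dist_of_mem (x := z) (Finset.mem_erase.2 ⟨hba, hb⟩)]
  have hle : ∀ᵐ x ∂ν, infDist x ({a, z} : Set E) ≤ infDist x α := by
    filter_upwards [ae_mem_msupp ν] with x hx
    refine (le_infDist hαne).2 fun b hb => ?_
    rcases eq_or_ne b a with rfl | hba
    · exact infDist_le_dist_of_mem (by simp)
    · linarith [hfar' x hx, infDist_le_dist_of_mem (x := x) (Finset.mem_erase.2 ⟨hba, hb⟩),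
        infDist_le_dist_of_mem (x := x) (s := {a, z}) (y := z) (by simp), hdiam x hx z hz]
  have hgain := integral_infDist_rpow_add_le (isBounded_iff.2 ⟨1, hdiam⟩) hr.le hαne
    (by simp) hzα hle
  have hopt := quantErrPow_le_integral ν r (γ := {a, z}) (Finset.insert_nonempty a {z})
    ((Finset.card_le_two).trans hn)
  rw [← hα.2.2] at hopt
  have hpos : 0 < ((2 * ε) ^ r - ε ^ r) * ν.real (ball z ε) :=
    mul_pos (sub_pos.2 (Real.rpow_lt_rpow hε.le (by linarith) hr)) (hμ₀.trans_le hzμ)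
  push_cast at hgain hopt
  linarith

theorem IsVoronoiPartition.integral_infDist_erase_rpow_le [DecidableEq E]
    (hν : Bornology.IsBounded (msupp ν)) (hr : 0 ≤ r) {α : Finset E} {P : E → Set E}
    (hP : IsVoronoiPartition α P) {a : E} (ha : a ∈ α) (hβ : (α.erase a).Nonempty) :
    ∫ x, infDist x (α.erase a : Set E) ^ r ∂ν
      ≤ ∫ x in P a, infDist x (α.erase a : Set E) ^ r ∂ν + ∫ x, infDist x α ^ r ∂ν := by
  have hPa := hP.1 a ha
  have hβint := integrable_infDist_rpow (ν := ν) hν (by exact_mod_cast hβ) hr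
  have hαint := integrable_infDist_rpow (ν := ν) hν (⟨a, ha⟩ : (α : Set E).Nonempty) hr
  rw [← integral_add_compl hPa hβint]
  gcongr
  calc ∫ x in (P a)ᶜ, infDist x (α.erase a : Set E) ^ r ∂ν
      ≤ ∫ x in (P a)ᶜ, infDist x α ^ r ∂ν :=
        setIntegral_mono_on hβint.integrableOn hαint.integrableOn hPa.compl fun x hx =>
          Real.rpow_le_rpow infDist_nonneg (hP.infDist_erase_le hx) hr
    _ ≤ ∫ x, infDist x α ^ r ∂ν :=
        setIntegral_le_integral hαint (ae_of_all _ fun x => Real.rpow_nonneg infDist_nonneg r)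

theorem IsOptimalSet.mul_le_four_rpow_mul_measureReal [DecidableEq E]
    (hdiam : ∀ x ∈ msupp ν, ∀ y ∈ msupp ν, dist x y ≤ 1) (hr : 0 < r) (hε : 0 < ε)
    (hε' : 3 * ε ≤ 2) (hμ₀ : 0 < μ₀) (hn : 2 ≤ n) (hspread : IsSpreadOut ν n ε μ₀)
    {α : Finset E} (hα : IsOptimalSet ν r n α) {P : E → Set E} (hP : IsVoronoiPartition α P)
    {a : E} (ha : a ∈ α) {x₀ : E} (hx₀ : x₀ ∈ msupp ν) :
    ((2 * ε) ^ r - ε ^ r) * μ₀ ≤ 4 ^ r * ν.real (P a) := by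
  have hν : Bornology.IsBounded (msupp ν) := isBounded_iff.2 ⟨1, hdiam⟩
  have hcard := hα.card_eq hν hr hε hμ₀ hspread
  have hβ : (α.erase a).Nonempty := by
    rw [← Finset.card_pos, Finset.card_erase_of_mem ha]
    omega
  have hβn : (α.erase a).card < n := by
    rw [Finset.card_erase_of_mem ha]
    omega
  have hnear := hα.infDist_erase_le hdiam hr hε hε' hμ₀ hn hspread ha hx₀
  have hbound : ∫ x in P a, infDist x (α.erase a : Set E) ^ r ∂ν ≤ 4 ^ r * ν.real (P a) := by
    calc ∫ x in P a, infDist x (α.erase a : Set E) ^ r ∂ν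
        ≤ ∫ _x in P a, (4 : ℝ) ^ r ∂ν := by
          refine setIntegral_mono_on_ae
            (integrable_infDist_rpow hν (by exact_mod_cast hβ) hr.le).integrableOn
            (integrable_const _) (hP.1 a ha) ?_
          filter_upwards [ae_mem_msupp ν] with x hx _
          refine Real.rpow_le_rpow infDist_nonneg ?_ hr.le
          linarith [infDist_le_infDist_add_dist (s := (α.erase a : Set E)) (x := x) (y := x₀),
            hdiam x hx x₀ hx₀]
      _ = 4 ^ r * ν.real (P a) := by rw [setIntegral_const, smul_eq_mul, mul_comm]
  have hstep := quantErrPow_add_le_integral hν hr.le hε.le hspread hβ hβn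
  have hsplit := hP.integral_infDist_erase_rpow_le hν hr.le ha hβ
  rw [hα.2.2] at hsplit
  linarith

end

theorem stmt8_general {E : Type*} [NormedAddCommGroup E] [NormedSpace ℝ E]
    [MeasurableSpace E] [BorelSpace E] [FiniteDimensional ℝ E]
    (r : ℝ) (hr : 0 < r)
    (C t : ℝ) (ht : 0 < t) (n : ℕ) (hn : 2 ≤ n) :
    ∃ c : ℝ, 0 < c ∧
      ∀ ν : MeasureTheory.Measure E, MeasureTheory.IsProbabilityMeasure ν →
        IsCompact (msupp ν) → Metric.diam (msupp ν) ≤ 1 →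
        (∀ x : E, ∀ ε : ℝ, 0 < ε →
          ν (Metric.closedBall x ε) ≤ ENNReal.ofReal (C * ε ^ t)) →
        ∀ α : Finset E, IsOptimalSet ν r n α →
          ∀ P : E → Set E, IsVoronoiPartition α P →
            ∀ a ∈ α, ENNReal.ofReal c ≤ ν (P a) := by
  classical
  obtain ⟨ε, hε, hε', hnε⟩ := exists_pos_three_mul_le_and_mul_rpow_le n C ht
  obtain ⟨T, hT⟩ := (isCompact_closedBall (0 : E) 1).elim_finite_subcover
    (fun y => ball y (ε / 2)) (fun _ => isOpen_ball) fun x _ =>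
      mem_iUnion.2 ⟨x, mem_ball_self (half_pos hε)⟩
  obtain ⟨y, hy, -⟩ := mem_iUnion₂.1 (hT (mem_closedBall_self zero_le_one))
  have hμ₀ : (0 : ℝ) < 1 / 2 / T.card := by
    have := Finset.card_pos.2 ⟨y, hy⟩
    positivity
  have hgain : 0 < (2 * ε) ^ r - ε ^ r := sub_pos.2 (Real.rpow_lt_rpow hε.le (by linarith) hr)
  refine ⟨((2 * ε) ^ r - ε ^ r) * (1 / 2 / T.card) / 4 ^ r, by positivity, ?_⟩
  intro ν hν hcompact hdiam hball α hα P hP a ha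
  have hdiam' : ∀ x ∈ msupp ν, ∀ y ∈ msupp ν, dist x y ≤ 1 := fun x hx y hy =>
    (dist_le_diam_of_mem hcompact.isBounded hx hy).trans hdiam
  obtain ⟨x₀, hx₀⟩ := msupp_nonempty ν
  have hbound := hα.mul_le_four_rpow_mul_measureReal hdiam' hr hε hε' hμ₀ hn
    (isSpreadOut_of_measure_closedBall_le hdiam' hball hε hnε hT) hP ha hx₀
  refine ENNReal.ofReal_le_of_le_toReal ?_
  rw [div_le_iff₀ (by positivity), ← measureReal_def]
  linarith

/-- For `C, t > 0` and an integer `n ≥ 2` there is `c_n > 0` (depending only on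
`C, t, n, r` and the space) such that for every Borel probability measure `ν` with compact
support of diameter at most `1` satisfying `ν(B(x,ε)) ≤ C·ε^t`, every `n`-optimal set `α` and
every Voronoi partition `P`: `ν(P_a(α)) ≥ c_n` for every `a ∈ α`. -/
theorem stmt8 {E : Type*} [NormedAddCommGroup E] [NormedSpace ℝ E]
    [MeasurableSpace E] [BorelSpace E] [FiniteDimensional ℝ E]
    (r : ℝ) (hr : 0 < r)
    (C t : ℝ) (hC : 0 < C) (ht : 0 < t) (n : ℕ) (hn : 2 ≤ n) :
    ∃ c : ℝ, 0 < c ∧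
      ∀ ν : MeasureTheory.Measure E, MeasureTheory.IsProbabilityMeasure ν →
        IsCompact (msupp ν) → Metric.diam (msupp ν) ≤ 1 →
        (∀ x : E, ∀ ε : ℝ, 0 < ε →
          ν (Metric.closedBall x ε) ≤ ENNReal.ofReal (C * ε ^ t)) →
        ∀ α : Finset E, IsOptimalSet ν r n α →
          ∀ P : E → Set E, IsVoronoiPartition α P →
            ∀ a ∈ α, ENNReal.ofReal c ≤ ν (P a) :=
  stmt8_general r hr C t ht n hn
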